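/- Let W, V ∈ ℝ^{n×k} have orthonormal columns, let ε ≥ 0 satisfy ‖WWᵀ − VVᵀ‖₂ ≤ ε, and let 𝒞 ⊆ {1,…,n} with |𝒞| = k be such that σ_min((Vᵀ)_{:,𝒞}) ≥ s > ε. Suppose further that W is a normalized indicator matrix (one nonzero per row, unit columns). Then there exists a permutation matrix Π̂ ∈ ℝ^{k×k} such that Π̂ᵀ(Wᵀ)_{:,𝒞} is a diagonal matrix with strictly positive diagonal entries. -/

import Mathlib

/-!
Each row of a normalized indicator matrix `W` has exactly one nonzero entry, in a column we call
its support column. If two selected rows `c i ≠ c j` had the same support column they would be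
equal rows, so `x = (e_{c i} - e_{c j}) / √2` is a unit vector with `Wᵀ x = 0`. Then
`‖Vᵀ x‖ = ‖V Vᵀ x‖ = ‖(W Wᵀ - V Vᵀ) x‖ ≤ ε`, whereas `Vᵀ x` is the image of a unit vector under
`(Vᵀ)_{:,𝒞}`, so `‖Vᵀ x‖ ≥ s > ε`. Hence `i ↦ supportCol (c i)` is a permutation of the columns,
and undoing it makes `(Wᵀ)_{:,𝒞}` diagonal with the positive entries of `W` on the diagonal.
-/

open Matrix BigOperators

noncomputable def vecNorm {m : ℕ} (v : Fin m → ℝ) : ℝ :=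
  Real.sqrt (∑ i, v i ^ 2)

noncomputable def frobNorm {m n : ℕ} (A : Matrix (Fin m) (Fin n) ℝ) : ℝ :=
  Real.sqrt (∑ i, ∑ j, A i j ^ 2)

/-- spectral (operator) norm w.r.t. Euclidean norms -/
noncomputable def specNorm {m n : ℕ} (A : Matrix (Fin m) (Fin n) ℝ) : ℝ :=
  sSup {r | ∃ x : Fin n → ℝ, vecNorm x ≤ 1 ∧ r = vecNorm (A.mulVec x)}

/-- smallest singular value (for matrices with at least as many rows as columns) -/
noncomputable def sMin {m n : ℕ} (A : Matrix (Fin m) (Fin n) ℝ) : ℝ :=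
  sInf {r | ∃ x : Fin n → ℝ, vecNorm x = 1 ∧ r = vecNorm (A.mulVec x)}

/-- W is a normalized indicator matrix: exactly one nonzero per row, nonnegative
entries, equal nonzero values within each column, orthonormal columns. -/
def IsNormalizedIndicator {n k : ℕ} (W : Matrix (Fin n) (Fin k) ℝ) : Prop :=
  (∀ i : Fin n, ∃! j : Fin k, W i j ≠ 0) ∧
  (∀ i j, 0 ≤ W i j) ∧
  (∀ i i' j, W i j ≠ 0 → W i' j ≠ 0 → W i j = W i' j) ∧
  Wᵀ * W = 1

lemma vecNorm_eq_norm {m : ℕ} (v : Fin m → ℝ) : vecNorm v = ‖WithLp.toLp 2 v‖ := by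
  simp [vecNorm, EuclideanSpace.norm_eq]

lemma vecNorm_eq_sqrt_dotProduct {m : ℕ} (v : Fin m → ℝ) : vecNorm v = Real.sqrt (v ⬝ᵥ v) := by
  simp [vecNorm, dotProduct, sq]

lemma vecNorm_neg {m : ℕ} (v : Fin m → ℝ) : vecNorm (-v) = vecNorm v := by
  simp [vecNorm]

lemma vecNorm_smul_single_sub_single {m : ℕ} {a b : Fin m} (hab : a ≠ b) :
    vecNorm ((Real.sqrt 2)⁻¹ • (Pi.single a 1 - Pi.single b 1)) = 1 := by
  have hsq : ∀ t, ((Real.sqrt 2)⁻¹ • (Pi.single a (1:ℝ) - Pi.single b 1) : Fin m → ℝ) t ^ 2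
      = 2⁻¹ * ((Pi.single a (1:ℝ) : Fin m → ℝ) t + (Pi.single b (1:ℝ) : Fin m → ℝ) t) := by
    intro t
    rcases eq_or_ne t a with rfl | hta <;> rcases eq_or_ne t b with rfl | htb <;>
      simp_all [inv_pow]
  simp only [vecNorm, hsq, ← Finset.mul_sum, Finset.sum_add_distrib, Finset.sum_pi_single']
  norm_num

open scoped Matrix.Norms.L2Operator in
lemma vecNorm_mulVec_le_specNorm {m n : ℕ} (A : Matrix (Fin m) (Fin n) ℝ) {x : Fin n → ℝ}
    (hx : vecNorm x ≤ 1) : vecNorm (A *ᵥ x) ≤ specNorm A := by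
  refine le_csSup ⟨‖A‖, ?_⟩ ⟨x, hx, rfl⟩
  rintro _ ⟨y, hy, rfl⟩
  rw [vecNorm_eq_norm] at hy ⊢
  simpa using (A.l2_opNorm_mulVec (WithLp.toLp 2 y)).trans
    (mul_le_of_le_one_right (norm_nonneg A) hy)

lemma sMin_le_vecNorm_mulVec {m n : ℕ} (A : Matrix (Fin m) (Fin n) ℝ) {u : Fin n → ℝ}
    (hu : vecNorm u = 1) : sMin A ≤ vecNorm (A *ᵥ u) :=
  csInf_le ⟨0, by rintro _ ⟨y, -, rfl⟩; exact Real.sqrt_nonneg _⟩ ⟨u, hu, rfl⟩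

lemma vecNorm_mulVec_of_transpose_mul_self {m n : ℕ} {V : Matrix (Fin m) (Fin n) ℝ}
    (hV : Vᵀ * V = 1) (y : Fin n → ℝ) : vecNorm (V *ᵥ y) = vecNorm y := by
  rw [vecNorm_eq_sqrt_dotProduct, vecNorm_eq_sqrt_dotProduct, dotProduct_mulVec, vecMul_mulVec,
    ← mulVec_transpose, hV, transpose_one, one_mulVec]

lemma vecNorm_transpose_mulVec_le_specNorm_sub {n p k : ℕ} {W : Matrix (Fin n) (Fin p) ℝ}
    {V : Matrix (Fin n) (Fin k) ℝ} (hV : Vᵀ * V = 1) {x : Fin n → ℝ} (hWx : Wᵀ *ᵥ x = 0)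
    (hx : vecNorm x ≤ 1) : vecNorm (Vᵀ *ᵥ x) ≤ specNorm (W * Wᵀ - V * Vᵀ) := by
  have hgap : (W * Wᵀ - V * Vᵀ) *ᵥ x = -(V *ᵥ (Vᵀ *ᵥ x)) := by
    rw [sub_mulVec, ← mulVec_mulVec, ← mulVec_mulVec, hWx, mulVec_zero, zero_sub]
  calc vecNorm (Vᵀ *ᵥ x) = vecNorm ((W * Wᵀ - V * Vᵀ) *ᵥ x) := by
        rw [hgap, vecNorm_neg, vecNorm_mulVec_of_transpose_mul_self hV]
    _ ≤ specNorm (W * Wᵀ - V * Vᵀ) := vecNorm_mulVec_le_specNorm _ hx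

lemma mulVec_smul_single_sub_single {m n R : Type*} [Fintype n] [DecidableEq n] [CommRing R]
    (A : Matrix m n R) (r : R) (a b : n) :
    A *ᵥ (r • (Pi.single a 1 - Pi.single b 1)) = r • (A.col a - A.col b) := by
  rw [mulVec_smul, mulVec_sub, mulVec_single_one, mulVec_single_one]

lemma sMin_submatrix_le_specNorm_of_row_eq {n p k q : ℕ} {W : Matrix (Fin n) (Fin p) ℝ}
    {V : Matrix (Fin n) (Fin k) ℝ} (hV : Vᵀ * V = 1) {c : Fin q → Fin n}
    (hc : Function.Injective c) {i j : Fin q} (hij : i ≠ j) (hrow : W (c i) = W (c j)) :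
    sMin ((Vᵀ).submatrix id c) ≤ specNorm (W * Wᵀ - V * Vᵀ) := by
  calc sMin ((Vᵀ).submatrix id c)
      ≤ vecNorm ((Vᵀ).submatrix id c *ᵥ ((Real.sqrt 2)⁻¹ • (Pi.single i 1 - Pi.single j 1))) :=
        sMin_le_vecNorm_mulVec _ (vecNorm_smul_single_sub_single hij)
    _ = vecNorm (Vᵀ *ᵥ ((Real.sqrt 2)⁻¹ • (Pi.single (c i) 1 - Pi.single (c j) 1))) := by
        rw [mulVec_smul_single_sub_single, mulVec_smul_single_sub_single]
        rfl
    _ ≤ specNorm (W * Wᵀ - V * Vᵀ) := by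
        refine vecNorm_transpose_mulVec_le_specNorm_sub hV ?_
          (vecNorm_smul_single_sub_single (hc.ne hij)).le
        rw [mulVec_smul_single_sub_single, show Wᵀ.col (c i) = Wᵀ.col (c j) from hrow,
          sub_self, smul_zero]

lemma transpose_of_perm_mul_apply {ι κ R : Type*} [Fintype ι] [DecidableEq ι]
    [NonAssocSemiring R] (σ : Equiv.Perm ι) (M : Matrix ι κ R) (i : ι) (j : κ) :
    ((of fun a b : ι => if σ a = b then (1 : R) else 0)ᵀ * M) i j = M (σ.symm i) j := by
  simp [mul_apply, ← Equiv.eq_symm_apply]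

namespace IsNormalizedIndicator

variable {n k : ℕ} {W : Matrix (Fin n) (Fin k) ℝ}

noncomputable def supportCol (hW : IsNormalizedIndicator W) (i : Fin n) : Fin k :=
  (hW.1 i).exists.choose

lemma apply_ne_zero_iff (hW : IsNormalizedIndicator W) {i : Fin n} {j : Fin k} :
    W i j ≠ 0 ↔ j = hW.supportCol i :=
  ⟨fun h => (hW.1 i).unique h (hW.1 i).exists.choose_spec,
    fun h => h ▸ (hW.1 i).exists.choose_spec⟩

lemma apply_supportCol_pos (hW : IsNormalizedIndicator W) (i : Fin n) :
    0 < W i (hW.supportCol i) :=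
  (hW.2.1 _ _).lt_of_ne' (hW.apply_ne_zero_iff.mpr rfl)

lemma row_eq_of_supportCol_eq (hW : IsNormalizedIndicator W) {i i' : Fin n}
    (h : hW.supportCol i = hW.supportCol i') : W i = W i' := by
  funext j
  by_cases hj : j = hW.supportCol i
  · exact hW.2.2.1 i i' j (hW.apply_ne_zero_iff.mpr hj) (hW.apply_ne_zero_iff.mpr (hj.trans h))
  · rw [not_not.mp (mt hW.apply_ne_zero_iff.mp hj),
      not_not.mp (mt hW.apply_ne_zero_iff.mp (h ▸ hj))]

lemma injective_supportCol_comp (hW : IsNormalizedIndicator W) {V : Matrix (Fin n) (Fin k) ℝ}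
    (hV : Vᵀ * V = 1) {q : ℕ} {c : Fin q → Fin n} (hc : Function.Injective c)
    (hgap : specNorm (W * Wᵀ - V * Vᵀ) < sMin ((Vᵀ).submatrix id c)) :
    Function.Injective (hW.supportCol ∘ c) := by
  intro i j h
  by_contra hij
  exact (sMin_submatrix_le_specNorm_of_row_eq hV hc hij (hW.row_eq_of_supportCol_eq h)).not_gt hgap

end IsNormalizedIndicator

/-- if the selected k×k submatrix of Vᵀ has smallest singular
value ≥ s > ε ≥ ‖WWᵀ − VVᵀ‖₂ and W is a normalized indicator matrix, then some
permutation Π̂ makes Π̂ᵀ(Wᵀ)_{:,𝒞} diagonal with strictly positive diagonal. -/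
theorem selected_columns_permuted_diagonal
    (n k : ℕ) (ε s : ℝ)
    (W V : Matrix (Fin n) (Fin k) ℝ)
    (hWind : IsNormalizedIndicator W)
    (hV : Vᵀ * V = 1)
    (hproj : specNorm (W * Wᵀ - V * Vᵀ) ≤ ε)
    (c : Fin k → Fin n) (hc : Function.Injective c)
    (hσ : s ≤ sMin ((Vᵀ).submatrix id c)) (hsε : ε < s) :
    ∃ σ : Equiv.Perm (Fin k),
      (∀ i j : Fin k, i ≠ j →
        (((Matrix.of fun a b : Fin k => if σ a = b then (1:ℝ) else 0)ᵀ *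
          (Wᵀ).submatrix id c) i j) = 0) ∧
      (∀ i : Fin k, 0 <
        (((Matrix.of fun a b : Fin k => if σ a = b then (1:ℝ) else 0)ᵀ *
          (Wᵀ).submatrix id c) i i)) := by
  have hinj := hWind.injective_supportCol_comp hV hc (by linarith)
  let e : Equiv.Perm (Fin k) := Equiv.ofBijective _ (Finite.injective_iff_bijective.mp hinj)
  refine ⟨e.symm, fun i j hij => ?_, fun i => ?_⟩
  all_goals rw [transpose_of_perm_mul_apply, Equiv.symm_symm]
  · by_contra hne
    exact hij (hinj (hWind.apply_ne_zero_iff.mp hne))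
  · exact hWind.apply_supportCol_pos (c i)
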